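/- Let u_xx, u_xy, u_yy, u_xxx, u_xxy, u_xyy, u_yyy be real numbers with u_xy² − u_xx·u_yy ≥ 0, and set r := √(u_xy² − u_xx·u_yy) and b := u_xy − r. Then f₁ = −u_yy³·u_xxx + 3·b·u_yy²·u_xxy − 3·b²·u_yy·u_xyy + b³·u_yyy, where f₁ := r·(u_xx·u_yy·u_yyy − 3·u_xxy·u_yy² − 4·u_xy²·u_yyy + 6·u_xy·u_xyy·u_yy) + (−3·u_xx·u_xy·u_yy·u_yyy + 3·u_xx·u_xyy·u_yy² − u_xxx·u_yy³ + 3·u_xxy·u_xy·u_yy² + 4·u_xy³·u_yyy − 6·u_xy²·u_xyy·u_yy). Consequently, the symbol of f₁, namely the cubic form (∂f₁/∂u_xxx)·η₁³ + (∂f₁/∂u_xxy)·η₁²η₂ + (∂f₁/∂u_xyy)·η₁η₂² + (∂f₁/∂u_yyy)·η₂³, equals −(u_yy·η₁ − b·η₂)³ for all η₁, η₂ ∈ ℝ, i.e. it is a perfect cube (the symbol of E₋¹ has rank one). -/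
import Mathlib


noncomputable section

/-- The function `f₁` cutting out the `Aff(3)`-invariant scalar third-order PDE `E₋¹`
over the region where the Hessian determinant is negative. -/
def f1 (uxx uxy uyy uxxx uxxy uxyy uyyy : ℝ) : ℝ :=
  Real.sqrt (uxy^2 - uxx*uyy) *
    (uxx*uyy*uyyy - 3*uxxy*uyy^2 - 4*uxy^2*uyyy + 6*uxy*uxyy*uyy)
  + (-3*uxx*uxy*uyy*uyyy + 3*uxx*uxyy*uyy^2 - uxxx*uyy^3
      + 3*uxxy*uxy*uyy^2 + 4*uxy^3*uyyy - 6*uxy^2*uxyy*uyy)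

lemma deriv_affine (a c x : ℝ) : deriv (fun s => a * s + c) x = a := by
  have : HasDerivAt (fun s : ℝ => a * s + c) a x := by
    simpa using ((hasDerivAt_id x).const_mul a).add_const c
  exact this.deriv

theorem stmt17 (uxx uxy uyy uxxx uxxy uxyy uyyy : ℝ)
    (h : uxy^2 - uxx*uyy ≥ 0) :
    let r := Real.sqrt (uxy^2 - uxx*uyy)
    let b := uxy - r
    f1 uxx uxy uyy uxxx uxxy uxyy uyyy
      = -uyy^3*uxxx + 3*b*uyy^2*uxxy - 3*b^2*uyy*uxyy + b^3*uyyy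
    ∧ ∀ η₁ η₂ : ℝ,
        (deriv (fun s => f1 uxx uxy uyy s uxxy uxyy uyyy) uxxx) * η₁^3
        + (deriv (fun s => f1 uxx uxy uyy uxxx s uxyy uyyy) uxxy) * η₁^2 * η₂
        + (deriv (fun s => f1 uxx uxy uyy uxxx uxxy s uyyy) uxyy) * η₁ * η₂^2
        + (deriv (fun s => f1 uxx uxy uyy uxxx uxxy uxyy s) uyyy) * η₂^3
        = -(uyy*η₁ - b*η₂)^3 := by
  intro r b
  have hr2 : r ^ 2 = uxy^2 - uxx*uyy := Real.sq_sqrt h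
  have hrdef : Real.sqrt (uxy^2 - uxx*uyy) = r := rfl
  constructor
  · show f1 uxx uxy uyy uxxx uxxy uxyy uyyy = _
    rw [f1, hrdef]
    show _ = -uyy^3*uxxx + 3*(uxy - r)*uyy^2*uxxy - 3*(uxy - r)^2*uyy*uxyy
      + (uxy - r)^3*uyyy
    linear_combination (3*uyy*uxyy - 3*uxy*uyyy + uyyy*r) * hr2
  · intro η₁ η₂
    have h1 : (fun s => f1 uxx uxy uyy s uxxy uxyy uyyy)
        = fun s => (-uyy^3) * s
          + (r * (uxx*uyy*uyyy - 3*uxxy*uyy^2 - 4*uxy^2*uyyy + 6*uxy*uxyy*uyy)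
            + (-3*uxx*uxy*uyy*uyyy + 3*uxx*uxyy*uyy^2
              + 3*uxxy*uxy*uyy^2 + 4*uxy^3*uyyy - 6*uxy^2*uxyy*uyy)) := by
      funext s; rw [f1, hrdef]; ring
    have h2 : (fun s => f1 uxx uxy uyy uxxx s uxyy uyyy)
        = fun s => (-3*r*uyy^2 + 3*uxy*uyy^2) * s
          + (r * (uxx*uyy*uyyy - 4*uxy^2*uyyy + 6*uxy*uxyy*uyy)
            + (-3*uxx*uxy*uyy*uyyy + 3*uxx*uxyy*uyy^2 - uxxx*uyy^3
              + 4*uxy^3*uyyy - 6*uxy^2*uxyy*uyy)) := by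
      funext s; rw [f1, hrdef]; ring
    have h3 : (fun s => f1 uxx uxy uyy uxxx uxxy s uyyy)
        = fun s => (6*r*uxy*uyy + 3*uxx*uyy^2 - 6*uxy^2*uyy) * s
          + (r * (uxx*uyy*uyyy - 3*uxxy*uyy^2 - 4*uxy^2*uyyy)
            + (-3*uxx*uxy*uyy*uyyy - uxxx*uyy^3
              + 3*uxxy*uxy*uyy^2 + 4*uxy^3*uyyy)) := by
      funext s; rw [f1, hrdef]; ring
    have h4 : (fun s => f1 uxx uxy uyy uxxx uxxy uxyy s)
        = fun s => (r*(uxx*uyy - 4*uxy^2) + (-3*uxx*uxy*uyy + 4*uxy^3)) * s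
          + (r * (-3*uxxy*uyy^2 + 6*uxy*uxyy*uyy)
            + (3*uxx*uxyy*uyy^2 - uxxx*uyy^3
              + 3*uxxy*uxy*uyy^2 - 6*uxy^2*uxyy*uyy)) := by
      funext s; rw [f1, hrdef]; ring
    rw [h1, h2, h3, h4, deriv_affine, deriv_affine, deriv_affine, deriv_affine]
    show _ = -(uyy*η₁ - (uxy - r)*η₂)^3
    linear_combination (3*uyy*η₁*η₂^2 - 3*uxy*η₂^3 + η₂^3*r) * hr2

end
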